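/- Let X be an abstract simplicial complex on a finite vertex set V with vertex weight function ω, let k ≥ 0 with X(k) ≠ ∅, and let P^ω be the X(k) × X(k) real matrix with (σ,σ)-entry Σ_{v∈σ} Σ_{u : {u,v}∈X(1)} ω(u) − Σ_{v∈lk_X(σ)} ω(v), with (σ,τ)-entry −(−1)^{ε(σ,τ)} ω(τ∖σ) when σ ∼ τ and the symmetric difference σ△τ is an edge of X (σ△τ ∈ X(1)), and 0 otherwise. Then every real eigenvalue of P^ω is at most k·Σ_{u∈V} ω(u) + max_{σ∈X(k)} { Σ_{j=0}^{k+1} (j+1)·Σ_{u∈σ[j]} ω(u) }. -/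

import Mathlib

open Finset

/-- An abstract simplicial complex on the vertex type `V`: a collection of finite subsets of `V`
closed under taking subsets and containing the empty set. -/
structure AbstractSC (V : Type*) where
  faces : Finset (Finset V)
  empty_mem : ∅ ∈ faces
  down_closed : ∀ ⦃σ τ : Finset V⦄, σ ∈ faces → τ ⊆ σ → τ ∈ faces

variable {V : Type*} [Fintype V] [LinearOrder V]

namespace AbstractSC

/-- The link of a face `σ`: the vertices `v ∉ σ` with `σ ∪ {v}` a face. -/
def link (X : AbstractSC V) (σ : Finset V) : Finset V :=
  univ.filter fun v => v ∉ σ ∧ insert v σ ∈ X.faces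

/-- The dimension of the complex (as an integer, so that `dim {∅} = -1`). -/
def dimension (X : AbstractSC V) : ℤ :=
  ((X.faces.sup Finset.card : ℕ) : ℤ) - 1

/-- The faces of cardinality `s`, i.e. the `(s-1)`-simplices. -/
def facesOfCard (X : AbstractSC V) (s : ℕ) : Finset (Finset V) :=
  X.faces.filter fun σ => σ.card = s

/-- The type of faces of cardinality `s` (the `(s-1)`-simplices). -/
abbrev Face (X : AbstractSC V) (s : ℕ) := {σ : Finset V // σ ∈ X.faces ∧ σ.card = s}

/-- `h(X)`: the maximal dimension of a missing face (a non-face all of whose proper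
subsets are faces), as an integer. -/
def hdim (X : AbstractSC V) : ℤ :=
  (((univ.powerset.filter fun σ : Finset V =>
      σ ∉ X.faces ∧ ∀ τ : Finset V, τ ⊂ σ → τ ∈ X.faces).sup Finset.card : ℕ) : ℤ) - 1

end AbstractSC

/-- The sign `(-1)^{ε(σ,τ)}`, where `ε(σ,τ)` is the number of elements of `σ ∩ τ` lying
strictly between the unique element of `σ \ τ` and the unique element of `τ \ σ`. -/
def epsSign (σ τ : Finset V) : ℝ :=
  if h : (σ \ τ).Nonempty ∧ (τ \ σ).Nonempty then
    (-1 : ℝ) ^ ((σ ∩ τ).filter fun w =>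
        min ((σ \ τ).min' h.1) ((τ \ σ).min' h.2) < w ∧
          w < max ((σ \ τ).min' h.1) ((τ \ σ).min' h.2)).card
  else 1

/-- The vertex-weighted `(s-1)`-dimensional Laplacian `L_{s-1}^ω(X)`, as a matrix indexed by
the faces of cardinality `s`. -/
noncomputable def lapFull (X : AbstractSC V) (ω : V → ℝ) (s : ℕ) :
    Matrix (X.Face s) (X.Face s) ℝ := fun σ τ =>
  if σ = τ then (∑ v ∈ X.link σ.1, ω v) + ∑ v ∈ σ.1, ω v
  else if (σ.1 ∩ τ.1).card + 1 = s ∧ σ.1 ∪ τ.1 ∉ X.faces then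
    epsSign σ.1 τ.1 * ∏ v ∈ τ.1 \ σ.1, ω v
  else 0

/-- The vertex-weighted `k`-dimensional Laplacian, for an integer `k ≥ -1`. -/
noncomputable def lapZ (X : AbstractSC V) (ω : V → ℝ) (k : ℤ) :
    Matrix (X.Face (k + 1).toNat) (X.Face (k + 1).toNat) ℝ :=
  lapFull X ω (k + 1).toNat

/-- The vertex-weighted `(s-1)`-dimensional down-Laplacian `L_{s-1}^{ω,down}(X)`. -/
noncomputable def lapDown (X : AbstractSC V) (ω : V → ℝ) (s : ℕ) :
    Matrix (X.Face s) (X.Face s) ℝ := fun σ τ =>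
  if σ = τ then ∑ v ∈ σ.1, ω v
  else if (σ.1 ∩ τ.1).card + 1 = s then epsSign σ.1 τ.1 * ∏ v ∈ τ.1 \ σ.1, ω v
  else 0

/-- The vertex-weighted `(s-1)`-dimensional up-Laplacian of a collection `F` of faces,
as a matrix indexed by all `s`-element subsets of `V`. -/
noncomputable def lapUpF (F : Finset (Finset V)) (ω : V → ℝ) (s : ℕ) :
    Matrix {σ : Finset V // σ.card = s} {σ : Finset V // σ.card = s} ℝ := fun σ τ =>
  if σ = τ then
    (if σ.1 ∈ F then ∑ u ∈ univ.filter (fun v => v ∉ σ.1 ∧ insert v σ.1 ∈ F), ω u else 0)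
  else if (σ.1 ∩ τ.1).card + 1 = s ∧ σ.1 ∪ τ.1 ∈ F then
    -(epsSign σ.1 τ.1 * ∏ v ∈ τ.1 \ σ.1, ω v)
  else 0

/-- The faces of the complex `X_{s-1}^c`, generated by the `s`-element subsets of `V`
that are not faces of `X`. -/
def complFaces (X : AbstractSC V) (s : ℕ) : Finset (Finset V) :=
  univ.powerset.filter fun τ => ∃ σ : Finset V, σ.card = s ∧ σ ∉ X.faces ∧ τ ⊆ σ

/-- The faces of the `(s-1)`-skeleton of the complete simplicial complex on `V`:
all subsets of cardinality at most `s`. -/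
def skeletonFaces (V : Type*) [Fintype V] [DecidableEq V] (s : ℕ) : Finset (Finset V) :=
  univ.powerset.filter fun σ : Finset V => σ.card ≤ s

/-- The vertex-weighted Laplacian `L^ω(G_X)` of the underlying graph of `X`. -/
noncomputable def graphLap (X : AbstractSC V) (ω : V → ℝ) : Matrix V V ℝ := fun u v =>
  if u = v then ∑ w ∈ univ.filter (fun w => w ≠ u ∧ ({u, w} : Finset V) ∈ X.faces), ω w
  else if ({u, v} : Finset V) ∈ X.faces then -ω v
  else 0

/-- The matrix `J^ω`, with `(u,v)` entry `ω v`. -/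
noncomputable def Jmat (ω : V → ℝ) : Matrix V V ℝ := fun _ v => ω v

/-- `N_σ(u)`: the codimension-one faces `η` of `σ` with `η ∪ {u} ∈ X`. -/
def Nset (X : AbstractSC V) (σ : Finset V) (u : V) : Finset (Finset V) :=
  (σ.powersetCard (σ.card - 1)).filter fun η => insert u η ∈ X.faces

/-- `σ[j]`: the vertices `u` lying in the link of every vertex of `σ` but not in the link of
`σ`, with `|N_σ(u)| = j`. -/
def bracket (X : AbstractSC V) (σ : Finset V) (j : ℕ) : Finset V :=
  univ.filter fun u =>
    (∀ v ∈ σ, u ≠ v ∧ ({v, u} : Finset V) ∈ X.faces) ∧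
      insert u σ ∉ X.faces ∧ (Nset X σ u).card = j

/-- The multiset of eigenvalues (with multiplicity) of a real square matrix:
the roots of its characteristic polynomial. -/
noncomputable def spec {m : Type*} [Fintype m] [DecidableEq m] (M : Matrix m m ℝ) :
    Multiset ℝ :=
  M.charpoly.roots

/-- The `i`-th smallest eigenvalue (1-indexed, with multiplicity). -/
noncomputable def eigAsc {m : Type*} [Fintype m] [DecidableEq m] (M : Matrix m m ℝ)
    (i : ℕ) : ℝ :=
  ((spec M).sort (· ≤ ·)).getD (i - 1) 0

/-- The `i`-th largest eigenvalue (1-indexed, with multiplicity). -/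
noncomputable def eigDesc {m : Type*} [Fintype m] [DecidableEq m] (M : Matrix m m ℝ)
    (i : ℕ) : ℝ :=
  ((spec M).sort (· ≤ ·)).getD ((spec M).card - i) 0

/-- `S^↑_{c,i}(M)`: the `i`-th smallest element (1-indexed) of the multiset of all sums of `c`
of the eigenvalues of `M` (over `c`-element subsets of the index set of the eigenvalues,
listed in increasing order). -/
noncomputable def sumsAsc {m : Type*} [Fintype m] [DecidableEq m] (M : Matrix m m ℝ)
    (c i : ℕ) : ℝ :=
  ((((Finset.range (spec M).card).powersetCard c).val.map
      fun J => ∑ j ∈ J, ((spec M).sort (· ≤ ·)).getD j 0).sort (· ≤ ·)).getD (i - 1) 0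

/-- Minimum of a real-valued function over a finite set (junk value `0` on `∅`). -/
noncomputable def minOver {α : Type*} (s : Finset α) (f : α → ℝ) : ℝ :=
  WithTop.untopD 0 ((s.image f).min)

/-- Maximum of a real-valued function over a finite set (junk value `0` on `∅`). -/
noncomputable def maxOver {α : Type*} (s : Finset α) (f : α → ℝ) : ℝ :=
  WithBot.unbotD 0 ((s.image f).max)

/-- The multiset of all sums `λ_0 + ⋯ + λ_{m-1}` over choices of one element `λ_j` from each
multiset `s j`, counted with multiplicity. -/
noncomputable def multisetSumChoices : (m : ℕ) → (Fin m → Multiset ℝ) → Multiset ℝ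
  | 0, _ => {0}
  | m + 1, s => (s 0).bind fun a => (multisetSumChoices m fun j => s j.succ).map (a + ·)

/-- The matrix `P^ω`: diagonal entry
`Σ_{v∈σ} Σ_{u : {u,v}∈X(1)} ω(u) - Σ_{v∈lk_X(σ)} ω(v)`, off-diagonal entry
`-(-1)^{ε(σ,τ)} ω(τ∖σ)` when `σ ∼ τ` and `σ△τ ∈ X(1)`, and `0` otherwise. -/
noncomputable def Pmat {V : Type*} [Fintype V] [LinearOrder V]
    (X : AbstractSC V) (ω : V → ℝ) (s : ℕ) :
    Matrix (X.Face s) (X.Face s) ℝ := fun σ τ =>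
  if σ = τ then
    (∑ v ∈ σ.1, ∑ u ∈ univ.filter (fun u => u ≠ v ∧ ({u, v} : Finset V) ∈ X.faces), ω u) -
      ∑ v ∈ X.link σ.1, ω v
  else if (σ.1 ∩ τ.1).card + 1 = s ∧ σ.1 ∪ τ.1 ∉ X.faces ∧
      (σ.1 \ τ.1) ∪ (τ.1 \ σ.1) ∈ X.faces then
    -(epsSign σ.1 τ.1 * ∏ v ∈ τ.1 \ σ.1, ω v)
  else 0


section Aux

lemma abs_epsSign (σ τ : Finset V) : |epsSign σ τ| = 1 := by
  unfold epsSign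
  split <;> simp [abs_pow]

lemma aux_sum_le {α β : Type*} [DecidableEq β] {s : Finset α} {t : Finset β} (f : α → β)
    (hinj : Set.InjOn f s) (hmem : ∀ a ∈ s, f a ∈ t) {g : α → ℝ} {h : β → ℝ}
    (hgh : ∀ a ∈ s, g a ≤ h (f a)) (hnn : ∀ b ∈ t, 0 ≤ h b) :
    ∑ a ∈ s, g a ≤ ∑ b ∈ t, h b := by
  calc ∑ a ∈ s, g a ≤ ∑ a ∈ s, h (f a) := Finset.sum_le_sum hgh
    _ = ∑ b ∈ s.image f, h b := (Finset.sum_image fun a ha b hb => hinj ha hb).symm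
    _ ≤ ∑ b ∈ t, h b :=
        Finset.sum_le_sum_of_subset_of_nonneg (Finset.image_subset_iff.mpr hmem)
          fun b hb _ => hnn b hb

lemma le_maxOver {α : Type*} (s : Finset α) (f : α → ℝ) {a : α} (ha : a ∈ s) :
    f a ≤ maxOver s f := by
  unfold maxOver
  have h := Finset.le_max (Finset.mem_image_of_mem f ha)
  cases hmax : (s.image f).max with
  | bot =>
      exact absurd (Finset.max_eq_bot.mp hmax ▸ Finset.mem_image_of_mem f ha)
        (Finset.notMem_empty _)
  | coe b =>
      rw [hmax] at h
      simpa using h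

lemma Pmat_offdiag_struct (X : AbstractSC V) (ω : V → ℝ) (hω : ∀ v, 0 < ω v) (k : ℕ)
    (σ τ : X.Face (k + 1)) (hne : σ ≠ τ) (h0 : Pmat X ω (k + 1) σ τ ≠ 0) :
    ∃ u v, u ∉ σ.1 ∧ v ∈ σ.1 ∧ τ.1 \ σ.1 = {u} ∧ σ.1 \ τ.1 = {v} ∧
      τ.1 = insert u (σ.1.erase v) ∧ insert u (σ.1.erase v) ∈ X.faces ∧
      insert u σ.1 ∉ X.faces ∧ ({v, u} : Finset V) ∈ X.faces ∧
      |Pmat X ω (k + 1) σ τ| = ω u := by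
  classical
  by_cases hc : (σ.1 ∩ τ.1).card + 1 = k + 1 ∧ σ.1 ∪ τ.1 ∉ X.faces ∧
      (σ.1 \ τ.1) ∪ (τ.1 \ σ.1) ∈ X.faces
  swap
  · exfalso; apply h0; simp only [Pmat, if_neg hne, if_neg hc]
  obtain ⟨hcard, hcup, hdiam⟩ := hc
  have hσc : σ.1.card = k + 1 := σ.2.2
  have hτc : τ.1.card = k + 1 := τ.2.2
  have hint : (σ.1 ∩ τ.1).card = k := by omega
  have h1 : (τ.1 \ σ.1).card = 1 := by
    have h := Finset.card_sdiff_add_card_inter τ.1 σ.1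
    rw [Finset.inter_comm] at h; omega
  have h2 : (σ.1 \ τ.1).card = 1 := by
    have h := Finset.card_sdiff_add_card_inter σ.1 τ.1
    omega
  obtain ⟨u, hu⟩ := Finset.card_eq_one.mp h1
  obtain ⟨v, hv⟩ := Finset.card_eq_one.mp h2
  have hu' : u ∈ τ.1 \ σ.1 := hu ▸ Finset.mem_singleton_self u
  have hv' : v ∈ σ.1 \ τ.1 := hv ▸ Finset.mem_singleton_self v
  have huτ : u ∈ τ.1 := (Finset.mem_sdiff.mp hu').1
  have huσ : u ∉ σ.1 := (Finset.mem_sdiff.mp hu').2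
  have hvσ : v ∈ σ.1 := (Finset.mem_sdiff.mp hv').1
  have hvτ : v ∉ τ.1 := (Finset.mem_sdiff.mp hv').2
  have hτeq : τ.1 = insert u (σ.1.erase v) := by
    ext x
    constructor
    · intro hx
      by_cases hxσ : x ∈ σ.1
      · exact Finset.mem_insert_of_mem (Finset.mem_erase.mpr
          ⟨fun hxv => hvτ (hxv ▸ hx), hxσ⟩)
      · have : x ∈ τ.1 \ σ.1 := Finset.mem_sdiff.mpr ⟨hx, hxσ⟩
        rw [hu, Finset.mem_singleton] at this
        rw [this]
        exact Finset.mem_insert_self u _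
    · intro hx
      rcases Finset.mem_insert.mp hx with hxu | hx
      · exact hxu ▸ huτ
      · rcases Finset.mem_erase.mp hx with ⟨hxv, hxσ⟩
        by_contra hxτ
        have : x ∈ σ.1 \ τ.1 := Finset.mem_sdiff.mpr ⟨hxσ, hxτ⟩
        rw [hv, Finset.mem_singleton] at this
        exact hxv this
  have hins : insert u σ.1 = σ.1 ∪ τ.1 := by
    apply Finset.Subset.antisymm
    · exact Finset.insert_subset (Finset.mem_union_right _ huτ) Finset.subset_union_left
    · refine Finset.union_subset (Finset.subset_insert _ _) ?_
      rw [hτeq]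
      exact Finset.insert_subset_insert u ((Finset.erase_subset _ _))
  refine ⟨u, v, huσ, hvσ, hu, hv, hτeq, hτeq ▸ τ.2.1, hins ▸ hcup, ?_, ?_⟩
  · rw [hv, hu, ← Finset.insert_eq] at hdiam; exact hdiam
  · have hcond : (σ.1 ∩ τ.1).card + 1 = k + 1 ∧ σ.1 ∪ τ.1 ∉ X.faces ∧
        (σ.1 \ τ.1) ∪ (τ.1 \ σ.1) ∈ X.faces := ⟨hcard, hcup, hdiam⟩
    have : Pmat X ω (k + 1) σ τ = -(epsSign σ.1 τ.1 * ∏ w ∈ τ.1 \ σ.1, ω w) := by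
      simp only [Pmat]
      rw [if_neg hne, if_pos hcond]
    rw [this, abs_neg, abs_mul, abs_epsSign, one_mul, hu, Finset.prod_singleton,
      abs_of_pos (hω u)]

lemma row_bound (X : AbstractSC V) (ω : V → ℝ) (hω : ∀ v, 0 < ω v) (k : ℕ)
    (σ : X.Face (k + 1)) :
    Pmat X ω (k + 1) σ σ + ∑ τ ∈ univ.erase σ, |Pmat X ω (k + 1) σ τ| ≤
      (k : ℝ) * ∑ u, ω u +
        ∑ j ∈ Finset.range (k + 2), ((j : ℝ) + 1) * ∑ u ∈ bracket X σ.1 j, ω u := by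
  classical
  have hσc : σ.1.card = k + 1 := σ.2.2
  -- diagonal rewrite
  have hdiag : Pmat X ω (k + 1) σ σ =
      (∑ u : V, ((σ.1.filter fun v => u ≠ v ∧ ({u, v} : Finset V) ∈ X.faces).card : ℝ) * ω u)
        - ∑ v ∈ X.link σ.1, ω v := by
    have h1 : Pmat X ω (k + 1) σ σ =
        (∑ v ∈ σ.1, ∑ u ∈ univ.filter (fun u => u ≠ v ∧ ({u, v} : Finset V) ∈ X.faces), ω u)
          - ∑ v ∈ X.link σ.1, ω v := by simp [Pmat]
    rw [h1]
    congr 1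
    calc ∑ v ∈ σ.1, ∑ u ∈ univ.filter (fun u => u ≠ v ∧ ({u, v} : Finset V) ∈ X.faces), ω u
        = ∑ v ∈ σ.1, ∑ u : V, if u ≠ v ∧ ({u, v} : Finset V) ∈ X.faces then ω u else 0 :=
          Finset.sum_congr rfl fun v _ => Finset.sum_filter _ _
      _ = ∑ u : V, ∑ v ∈ σ.1, if u ≠ v ∧ ({u, v} : Finset V) ∈ X.faces then ω u else 0 :=
          Finset.sum_comm
      _ = _ := by
          refine Finset.sum_congr rfl fun u _ => ?_
          rw [← Finset.sum_filter, Finset.sum_const, nsmul_eq_mul]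
  -- off-diagonal bound
  have hVne : σ.1.Nonempty := Finset.card_pos.mp (by omega)
  obtain ⟨d, -⟩ := hVne
  set pk : Finset V → V := fun t => if h : t.Nonempty then t.min' h else d with hpkdef
  have hpk1 : ∀ a : V, pk {a} = a := fun a => by
    simp [hpkdef, Finset.min'_singleton]
  have hoff : ∑ τ ∈ univ.erase σ, |Pmat X ω (k + 1) σ τ| ≤
      ∑ u ∈ univ \ σ.1, ((σ.1.filter fun v => insert u (σ.1.erase v) ∈ X.faces ∧
        insert u σ.1 ∉ X.faces ∧ ({v, u} : Finset V) ∈ X.faces).card : ℝ) * ω u := by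
    have hstep1 : ∑ τ ∈ univ.erase σ, |Pmat X ω (k + 1) σ τ| =
        ∑ τ ∈ (univ.erase σ).filter (fun τ => Pmat X ω (k + 1) σ τ ≠ 0),
          |Pmat X ω (k + 1) σ τ| := by
      refine (Finset.sum_subset (Finset.filter_subset _ _) fun τ h1 h2 => ?_).symm
      simp only [Finset.mem_filter, not_and, not_not] at h2
      exact abs_eq_zero.mpr (h2 h1)
    rw [hstep1]
    have hstep2 : ∑ τ ∈ (univ.erase σ).filter (fun τ => Pmat X ω (k + 1) σ τ ≠ 0),
          |Pmat X ω (k + 1) σ τ| ≤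
        ∑ p ∈ (univ \ σ.1) ×ˢ σ.1, (if insert p.1 (σ.1.erase p.2) ∈ X.faces ∧
          insert p.1 σ.1 ∉ X.faces ∧ ({p.2, p.1} : Finset V) ∈ X.faces then ω p.1 else 0) := by
      apply aux_sum_le (f := fun τ => (pk (τ.1 \ σ.1), pk (σ.1 \ τ.1)))
      · intro τ1 h1 τ2 h2 heq
        have heq' : (pk (τ1.1 \ σ.1), pk (σ.1 \ τ1.1)) = (pk (τ2.1 \ σ.1), pk (σ.1 \ τ2.1)) :=
          heq
        simp only [Finset.coe_filter, Set.mem_setOf_eq, Finset.mem_erase] at h1 h2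
        obtain ⟨u1, v1, -, -, hd1, hd1', he1, -, -, -, -⟩ :=
          Pmat_offdiag_struct X ω hω k σ τ1 (Ne.symm h1.1.1) h1.2
        obtain ⟨u2, v2, -, -, hd2, hd2', he2, -, -, -, -⟩ :=
          Pmat_offdiag_struct X ω hω k σ τ2 (Ne.symm h2.1.1) h2.2
        rw [hd1, hd1', hd2, hd2', hpk1, hpk1, hpk1, hpk1, Prod.mk.injEq] at heq'
        apply Subtype.ext
        rw [he1, he2, heq'.1, heq'.2]
      · intro τ hτ
        simp only [Finset.mem_filter, Finset.mem_erase] at hτ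
        obtain ⟨u, v, huσ, hvσ, hd, hd', -, -, -, -, -⟩ :=
          Pmat_offdiag_struct X ω hω k σ τ (Ne.symm hτ.1.1) hτ.2
        show (pk (τ.1 \ σ.1), pk (σ.1 \ τ.1)) ∈ (univ \ σ.1) ×ˢ σ.1
        rw [hd, hd', hpk1, hpk1]
        exact Finset.mem_product.mpr
          ⟨Finset.mem_sdiff.mpr ⟨Finset.mem_univ u, huσ⟩, hvσ⟩
      · intro τ hτ
        simp only [Finset.mem_filter, Finset.mem_erase] at hτ
        obtain ⟨u, v, -, -, hd, hd', -, hQ1, hQ2, hQ3, habs⟩ :=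
          Pmat_offdiag_struct X ω hω k σ τ (Ne.symm hτ.1.1) hτ.2
        show |Pmat X ω (k + 1) σ τ| ≤
          if insert (pk (τ.1 \ σ.1)) (σ.1.erase (pk (σ.1 \ τ.1))) ∈ X.faces ∧
              insert (pk (τ.1 \ σ.1)) σ.1 ∉ X.faces ∧
              ({pk (σ.1 \ τ.1), pk (τ.1 \ σ.1)} : Finset V) ∈ X.faces
          then ω (pk (τ.1 \ σ.1)) else 0
        rw [hd, hd', hpk1, hpk1, habs, if_pos ⟨hQ1, hQ2, hQ3⟩]
      · intro b hb
        split_ifs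
        · exact (hω b.1).le
        · exact le_rfl
    refine hstep2.trans (le_of_eq ?_)
    rw [Finset.sum_product]
    refine Finset.sum_congr rfl fun u _ => ?_
    show (∑ v ∈ σ.1, if insert u (σ.1.erase v) ∈ X.faces ∧ insert u σ.1 ∉ X.faces ∧
        ({v, u} : Finset V) ∈ X.faces then ω u else 0)
      = ((σ.1.filter fun v => insert u (σ.1.erase v) ∈ X.faces ∧
          insert u σ.1 ∉ X.faces ∧ ({v, u} : Finset V) ∈ X.faces).card : ℝ) * ω u
    rw [← Finset.sum_filter, Finset.sum_const, nsmul_eq_mul]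
  -- pointwise bound
  have key : ∀ u : V,
      ((σ.1.filter fun v => u ≠ v ∧ ({u, v} : Finset V) ∈ X.faces).card : ℝ) * ω u
        - (if u ∈ X.link σ.1 then ω u else 0)
        + (if u ∈ univ \ σ.1 then
            ((σ.1.filter fun v => insert u (σ.1.erase v) ∈ X.faces ∧
              insert u σ.1 ∉ X.faces ∧ ({v, u} : Finset V) ∈ X.faces).card : ℝ) * ω u else 0)
      ≤ (k : ℝ) * ω u +
        ∑ j ∈ Finset.range (k + 2), ((j : ℝ) + 1) *
          (if u ∈ bracket X σ.1 j then ω u else 0) := by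
    intro u
    have hB : (0:ℝ) ≤ ∑ j ∈ Finset.range (k + 2), ((j : ℝ) + 1) *
        (if u ∈ bracket X σ.1 j then ω u else 0) :=
      Finset.sum_nonneg fun j _ => mul_nonneg (by positivity)
        (by split_ifs; exacts [(hω u).le, le_rfl])
    by_cases huσ : u ∈ σ.1
    · have hL : (if u ∈ X.link σ.1 then ω u else 0) = 0 := by
        rw [if_neg]; simp [AbstractSC.link, huσ]
      have hS : (if u ∈ univ \ σ.1 then
          ((σ.1.filter fun v => insert u (σ.1.erase v) ∈ X.faces ∧
            insert u σ.1 ∉ X.faces ∧ ({v, u} : Finset V) ∈ X.faces).card : ℝ) * ω u else 0)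
          = 0 := by rw [if_neg]; simp [huσ]
      have hA : (σ.1.filter fun v => u ≠ v ∧ ({u, v} : Finset V) ∈ X.faces).card ≤ k := by
        have hsub : (σ.1.filter fun v => u ≠ v ∧ ({u, v} : Finset V) ∈ X.faces) ⊆
            σ.1.erase u := by
          intro v hv
          rcases Finset.mem_filter.mp hv with ⟨hv1, hne, -⟩
          exact Finset.mem_erase.mpr ⟨Ne.symm hne, hv1⟩
        calc (σ.1.filter fun v => u ≠ v ∧ ({u, v} : Finset V) ∈ X.faces).card
            ≤ (σ.1.erase u).card := Finset.card_le_card hsub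
          _ = k := by rw [Finset.card_erase_of_mem huσ, hσc]; omega
      have hA' : ((σ.1.filter fun v => u ≠ v ∧ ({u, v} : Finset V) ∈ X.faces).card : ℝ)
          ≤ (k : ℝ) := by exact_mod_cast hA
      have := mul_le_mul_of_nonneg_right hA' (hω u).le
      rw [hL, hS]
      linarith
    · have hSmem : u ∈ univ \ σ.1 := Finset.mem_sdiff.mpr ⟨Finset.mem_univ u, huσ⟩
      rw [if_pos hSmem]
      have hA1 : (σ.1.filter fun v => u ≠ v ∧ ({u, v} : Finset V) ∈ X.faces).card ≤ k + 1 := by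
        calc _ ≤ σ.1.card := Finset.card_le_card (Finset.filter_subset _ _)
          _ = k + 1 := hσc
      have hA1' : ((σ.1.filter fun v => u ≠ v ∧ ({u, v} : Finset V) ∈ X.faces).card : ℝ)
          ≤ (k : ℝ) + 1 := by exact_mod_cast hA1
      by_cases hins : insert u σ.1 ∈ X.faces
      · have hL : (if u ∈ X.link σ.1 then ω u else 0) = ω u := by
          rw [if_pos]; simp [AbstractSC.link, huσ, hins]
        have hc0 : (σ.1.filter fun v => insert u (σ.1.erase v) ∈ X.faces ∧
            insert u σ.1 ∉ X.faces ∧ ({v, u} : Finset V) ∈ X.faces) = ∅ := by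
          rw [Finset.filter_eq_empty_iff]
          rintro v - ⟨-, h2, -⟩
          exact h2 hins
        rw [hL, hc0]
        have := mul_le_mul_of_nonneg_right hA1' (hω u).le
        simp only [Finset.card_empty, Nat.cast_zero, zero_mul]
        linarith
      · have hL : (if u ∈ X.link σ.1 then ω u else 0) = 0 := by
          rw [if_neg]; simp [AbstractSC.link, hins]
        rw [hL]
        by_cases hadj : ∀ v ∈ σ.1, ({u, v} : Finset V) ∈ X.faces
        · -- bracket case
          have hbr : u ∈ bracket X σ.1 ((Nset X σ.1 u).card) :=
            Finset.mem_filter.mpr ⟨Finset.mem_univ u,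
              ⟨fun v hv => ⟨fun h => huσ (h ▸ hv),
                by rw [Finset.pair_comm]; exact hadj v hv⟩, hins, rfl⟩⟩
          have hjle : (Nset X σ.1 u).card ≤ k + 1 := by
            calc (Nset X σ.1 u).card
                ≤ (σ.1.powersetCard (σ.1.card - 1)).card :=
                  Finset.card_le_card (Finset.filter_subset _ _)
              _ = k + 1 := by
                  rw [Finset.card_powersetCard, hσc]
                  simp [Nat.choose_succ_self_right]
          have hcle : (σ.1.filter fun v => insert u (σ.1.erase v) ∈ X.faces ∧
              insert u σ.1 ∉ X.faces ∧ ({v, u} : Finset V) ∈ X.faces).card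
              ≤ (Nset X σ.1 u).card := by
            apply Finset.card_le_card_of_injOn (fun v => σ.1.erase v)
            · intro v hv
              rcases Finset.mem_filter.mp hv with ⟨hvσ, hf1, -, -⟩
              show σ.1.erase v ∈ Nset X σ.1 u
              simp only [Nset, Finset.mem_filter, Finset.mem_powersetCard]
              exact ⟨⟨Finset.erase_subset _ _, Finset.card_erase_of_mem hvσ⟩, hf1⟩
            · intro v1 h1 v2 h2 heq
              simp only [Finset.coe_filter, Set.mem_setOf_eq] at h1 h2
              by_contra hne
              have heq2 : σ.1.erase v1 = σ.1.erase v2 := heq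
              have hmem : v1 ∈ σ.1.erase v2 := Finset.mem_erase.mpr ⟨hne, h1.1⟩
              rw [← heq2] at hmem
              exact Finset.notMem_erase v1 σ.1 hmem
          have hcle' : ((σ.1.filter fun v => insert u (σ.1.erase v) ∈ X.faces ∧
              insert u σ.1 ∉ X.faces ∧ ({v, u} : Finset V) ∈ X.faces).card : ℝ)
              ≤ ((Nset X σ.1 u).card : ℝ) := by exact_mod_cast hcle
          have hB' : (((Nset X σ.1 u).card : ℝ) + 1) * ω u ≤
              ∑ j ∈ Finset.range (k + 2), ((j : ℝ) + 1) *
                (if u ∈ bracket X σ.1 j then ω u else 0) := by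
            have hsingle := Finset.single_le_sum
              (f := fun (j : ℕ) => ((j : ℝ) + 1) * (if u ∈ bracket X σ.1 j then ω u else 0))
              (fun j _ => mul_nonneg (by positivity)
                (by split_ifs; exacts [(hω u).le, le_rfl]))
              (Finset.mem_range.mpr (by omega : (Nset X σ.1 u).card < k + 2))
            have hsingle' : (((Nset X σ.1 u).card : ℝ) + 1) *
                (if u ∈ bracket X σ.1 ((Nset X σ.1 u).card) then ω u else 0) ≤
                ∑ j ∈ Finset.range (k + 2), ((j : ℝ) + 1) *
                  (if u ∈ bracket X σ.1 j then ω u else 0) := hsingle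
            rwa [if_pos hbr] at hsingle'
          have p1 := mul_le_mul_of_nonneg_right hA1' (hω u).le
          have p2 := mul_le_mul_of_nonneg_right hcle' (hω u).le
          linarith
        · push_neg at hadj
          obtain ⟨v₀, hv₀σ, hv₀⟩ := hadj
          have hA : (σ.1.filter fun v => u ≠ v ∧ ({u, v} : Finset V) ∈ X.faces).card ≤ k := by
            have hsub : (σ.1.filter fun v => u ≠ v ∧ ({u, v} : Finset V) ∈ X.faces) ⊆
                σ.1.erase v₀ := by
              intro v hv
              rcases Finset.mem_filter.mp hv with ⟨hv1, -, hadjv⟩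
              refine Finset.mem_erase.mpr ⟨fun hvv => ?_, hv1⟩
              exact hv₀ (hvv ▸ hadjv)
            calc (σ.1.filter fun v => u ≠ v ∧ ({u, v} : Finset V) ∈ X.faces).card
                ≤ (σ.1.erase v₀).card := Finset.card_le_card hsub
              _ = k := by rw [Finset.card_erase_of_mem hv₀σ, hσc]; omega
          have hA' : ((σ.1.filter fun v => u ≠ v ∧ ({u, v} : Finset V) ∈ X.faces).card : ℝ)
              ≤ (k : ℝ) := by exact_mod_cast hA
          have hc0 : (σ.1.filter fun v => insert u (σ.1.erase v) ∈ X.faces ∧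
              insert u σ.1 ∉ X.faces ∧ ({v, u} : Finset V) ∈ X.faces) = ∅ := by
            rw [Finset.filter_eq_empty_iff]
            rintro v hvσ ⟨h1, -, h3⟩
            by_cases hvv : v = v₀
            · subst hvv
              exact hv₀ (by rw [Finset.pair_comm]; exact h3)
            · apply hv₀
              have hsub : ({u, v₀} : Finset V) ⊆ insert u (σ.1.erase v) := by
                intro x hx
                rcases Finset.mem_insert.mp hx with rfl | hx
                · exact Finset.mem_insert_self _ _
                · rw [Finset.mem_singleton] at hx
                  subst hx
                  exact Finset.mem_insert_of_mem
                    (Finset.mem_erase.mpr ⟨fun h => hvv h.symm, hv₀σ⟩)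
              exact X.down_closed h1 hsub
          rw [hc0]
          have := mul_le_mul_of_nonneg_right hA' (hω u).le
          simp only [Finset.card_empty, Nat.cast_zero, zero_mul]
          linarith
  -- assemble
  have hlink : ∑ v ∈ X.link σ.1, ω v = ∑ u : V, (if u ∈ X.link σ.1 then ω u else 0) := by
    rw [Finset.sum_ite_mem, Finset.univ_inter]
  have hsd : ∑ u ∈ univ \ σ.1, ((σ.1.filter fun v => insert u (σ.1.erase v) ∈ X.faces ∧
        insert u σ.1 ∉ X.faces ∧ ({v, u} : Finset V) ∈ X.faces).card : ℝ) * ω u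
      = ∑ u : V, (if u ∈ univ \ σ.1 then
          ((σ.1.filter fun v => insert u (σ.1.erase v) ∈ X.faces ∧
            insert u σ.1 ∉ X.faces ∧ ({v, u} : Finset V) ∈ X.faces).card : ℝ) * ω u else 0) := by
    rw [Finset.sum_ite_mem, Finset.univ_inter]
  calc Pmat X ω (k + 1) σ σ + ∑ τ ∈ univ.erase σ, |Pmat X ω (k + 1) σ τ|
      ≤ ((∑ u : V, ((σ.1.filter fun v => u ≠ v ∧ ({u, v} : Finset V) ∈ X.faces).card : ℝ) * ω u)
          - ∑ v ∈ X.link σ.1, ω v)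
        + ∑ u ∈ univ \ σ.1, ((σ.1.filter fun v => insert u (σ.1.erase v) ∈ X.faces ∧
            insert u σ.1 ∉ X.faces ∧ ({v, u} : Finset V) ∈ X.faces).card : ℝ) * ω u := by
        rw [hdiag]; exact add_le_add le_rfl hoff
    _ = ∑ u : V, (((σ.1.filter fun v => u ≠ v ∧ ({u, v} : Finset V) ∈ X.faces).card : ℝ) * ω u
          - (if u ∈ X.link σ.1 then ω u else 0)
          + (if u ∈ univ \ σ.1 then
              ((σ.1.filter fun v => insert u (σ.1.erase v) ∈ X.faces ∧
                insert u σ.1 ∉ X.faces ∧ ({v, u} : Finset V) ∈ X.faces).card : ℝ) * ω u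
            else 0)) := by
        rw [hlink, hsd, ← Finset.sum_sub_distrib, ← Finset.sum_add_distrib]
    _ ≤ ∑ u : V, ((k : ℝ) * ω u +
          ∑ j ∈ Finset.range (k + 2), ((j : ℝ) + 1) *
            (if u ∈ bracket X σ.1 j then ω u else 0)) :=
        Finset.sum_le_sum fun u _ => key u
    _ = (k : ℝ) * ∑ u, ω u +
          ∑ j ∈ Finset.range (k + 2), ((j : ℝ) + 1) * ∑ u ∈ bracket X σ.1 j, ω u := by
        rw [Finset.sum_add_distrib, ← Finset.mul_sum]
        congr 1
        rw [Finset.sum_comm]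
        refine Finset.sum_congr rfl fun j _ => ?_
        rw [← Finset.mul_sum, Finset.sum_ite_mem, Finset.univ_inter]

end Aux

/-- Every real eigenvalue of `P^ω` is at most
`k·Σ_{u∈V} ω(u) + max_{σ∈X(k)} Σ_{j=0}^{k+1} (j+1)·Σ_{u∈σ[j]} ω(u)`. -/
theorem statement14 {V : Type*} [Fintype V] [LinearOrder V]
    (X : AbstractSC V) (ω : V → ℝ) (hω : ∀ v, 0 < ω v)
    (hvert : ∀ v : V, ({v} : Finset V) ∈ X.faces)
    (k : ℕ) (hne : (X.facesOfCard (k + 1)).Nonempty)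
    (μ : ℝ) (x : X.Face (k + 1) → ℝ) (hx : x ≠ 0)
    (hμ : (Pmat X ω (k + 1)).mulVec x = μ • x) :
    μ ≤ (k : ℝ) * ∑ u, ω u +
        maxOver (X.facesOfCard (k + 1))
          (fun σ => ∑ j ∈ Finset.range (k + 2), ((j : ℝ) + 1) * ∑ u ∈ bracket X σ j, ω u) := by
  classical
  have hev : Module.End.HasEigenvalue (Matrix.toLin' (Pmat X ω (k + 1))) μ :=
    Module.End.hasEigenvalue_of_hasEigenvector
      ⟨Module.End.mem_eigenspace_iff.mpr (by rw [Matrix.toLin'_apply, hμ]), hx⟩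
  obtain ⟨i, hi⟩ := eigenvalue_mem_ball hev
  rw [Metric.mem_closedBall, Real.dist_eq] at hi
  simp only [Real.norm_eq_abs] at hi
  have h1 : μ ≤ Pmat X ω (k + 1) i i + ∑ τ ∈ univ.erase i, |Pmat X ω (k + 1) i τ| := by
    have := (abs_le.mp hi).2
    linarith
  have h2 := row_bound X ω hω k i
  have h3 : ∑ j ∈ Finset.range (k + 2), ((j : ℝ) + 1) * ∑ u ∈ bracket X i.1 j, ω u ≤
      maxOver (X.facesOfCard (k + 1))
        (fun σ => ∑ j ∈ Finset.range (k + 2), ((j : ℝ) + 1) * ∑ u ∈ bracket X σ j, ω u) :=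
    le_maxOver (X.facesOfCard (k + 1))
      (fun σ => ∑ j ∈ Finset.range (k + 2), ((j : ℝ) + 1) * ∑ u ∈ bracket X σ j, ω u)
      (Finset.mem_filter.mpr ⟨i.2.1, i.2.2⟩)
  linarith
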